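/- arXiv:1612.07435 — 2 statements merged into one kernel-verified Lean document; each statement's English description precedes it below -/
import Mathlib

section
/- Fix real numbers a and b with a ≥ b > 0. Then the function f(y) = a·y² + b·log(erfc(y)) is strictly convex on (0, ∞); that is, f''(y) > 0 for all y > 0. -/
/-! With `g = (2/√π) e^{-y²} = -erfc'`, one has `(log erfc)'' = (2 y g erfc - g²) / erfc²`, so
`f'' = 2a + b (log erfc)''` exceeds `2 (a - b) ≥ 0` as soon as `2 erfc² + 2 y g erfc - g² > 0`.
The positive root of this quadratic in `erfc` is `(2/√π) ψ(y)` with Komatsu's bound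
`ψ(y) = e^{-y²} (√(y² + 2) - y) / 2`, and the Gaussian tail `∫_y^∞ e^{-t²} dt` lies
strictly above `ψ(y)`: their difference is strictly decreasing and tends to `0` at `+∞`. -/

open Real MeasureTheory Filter Set

noncomputable def erf (y : ℝ) : ℝ := (2 / Real.sqrt π) * ∫ t in (0:ℝ)..y, Real.exp (-t ^ 2)

noncomputable def erfc (y : ℝ) : ℝ := (2 / Real.sqrt π) * ∫ t in Set.Ioi y, Real.exp (-t ^ 2)

noncomputable def erfinv : ℝ → ℝ := Function.invFun erf

open Topology

lemma integrableOn_exp_neg_sq (s : Set ℝ) : IntegrableOn (fun t : ℝ => exp (-t ^ 2)) s := by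
  simpa using (integrable_exp_neg_mul_sq one_pos).integrableOn

lemma hasDerivAt_integral_Ioi_exp_neg_sq (y : ℝ) :
    HasDerivAt (fun u => ∫ t in Ioi u, exp (-t ^ 2)) (-exp (-y ^ 2)) y := by
  have htail : (fun u => ∫ t in Ioi u, exp (-t ^ 2))
      = fun u => (∫ t in Ioi 0, exp (-t ^ 2)) - ∫ t in 0..u, exp (-t ^ 2) := by
    funext u
    rw [← intervalIntegral.integral_Ioi_sub_Ioi' (integrableOn_exp_neg_sq _)
      (integrableOn_exp_neg_sq _), sub_sub_cancel]
  rw [htail]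
  exact ((continuous_exp.comp (continuous_pow 2).neg).integral_hasStrictDerivAt 0 y).hasDerivAt
    |>.const_sub _

lemma hasDerivAt_exp_neg_sq (y : ℝ) :
    HasDerivAt (fun x => exp (-x ^ 2)) (-2 * y * exp (-y ^ 2)) y := by
  have hsq : HasDerivAt (fun x : ℝ => x ^ 2) (2 * y) y := by simpa using hasDerivAt_pow 2 y
  exact ((hasDerivAt_exp _).comp y hsq.fun_neg).congr_deriv (by ring)

noncomputable def komatsuBound (y : ℝ) : ℝ := exp (-y ^ 2) * (√(y ^ 2 + 2) - y) / 2

lemma lt_sqrt_sq_add_two (y : ℝ) : y < √(y ^ 2 + 2) :=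
  calc y ≤ |y| := le_abs_self y
    _ = √(y ^ 2) := (sqrt_sq_eq_abs y).symm
    _ < √(y ^ 2 + 2) := sqrt_lt_sqrt (sq_nonneg y) (by linarith)

lemma komatsuBound_pos (y : ℝ) : 0 < komatsuBound y := by
  have := sub_pos.2 (lt_sqrt_sq_add_two y)
  unfold komatsuBound
  positivity

lemma hasDerivAt_komatsuBound (y : ℝ) :
    HasDerivAt komatsuBound
      (exp (-y ^ 2) * (y / √(y ^ 2 + 2) - 1 - 2 * y * (√(y ^ 2 + 2) - y)) / 2) y := by
  have hsq : HasDerivAt (fun x : ℝ => x ^ 2) (2 * y) y := by simpa using hasDerivAt_pow 2 y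
  have hsqrt : HasDerivAt (fun x => √(x ^ 2 + 2)) (2 * y / (2 * √(y ^ 2 + 2))) y :=
    (hsq.add_const 2).sqrt (by positivity)
  refine (((hasDerivAt_exp_neg_sq y).mul (hsqrt.sub (hasDerivAt_id y))).div_const 2).congr_deriv ?_
  simp only [Pi.sub_apply, id_eq]
  field_simp
  ring

lemma neg_exp_neg_sq_lt_deriv_komatsuBound (y : ℝ) : -exp (-y ^ 2) < deriv komatsuBound y := by
  rw [(hasDerivAt_komatsuBound y).deriv]
  set s := √(y ^ 2 + 2)
  have hs0 : 0 < s := sqrt_pos.2 (by positivity)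
  have hs : s ^ 2 = y ^ 2 + 2 := sq_sqrt (by positivity)
  -- `(s (2y² + 1))² = (2y³ + 3y)² + 2`
  have hcubic : 2 * y ^ 3 + 3 * y < s * (2 * y ^ 2 + 1) :=
    (abs_lt_of_sq_lt_sq' (by rw [mul_pow, hs]; nlinarith) (by positivity)).2
  have hrhs : exp (-y ^ 2) * (y / s - 1 - 2 * y * (s - y)) / 2 + exp (-y ^ 2)
      = exp (-y ^ 2) * (s * (2 * y ^ 2 + 1) - (2 * y ^ 3 + 3 * y)) / (2 * s) := by
    field_simp
    linear_combination (-2 * y) * hs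
  have hpos : 0 < exp (-y ^ 2) * (s * (2 * y ^ 2 + 1) - (2 * y ^ 3 + 3 * y)) / (2 * s) := by
    have := sub_pos.2 hcubic
    positivity
  linarith

lemma tendsto_komatsuBound_atTop : Tendsto komatsuBound atTop (𝓝 0) := by
  have hexp : Tendsto (fun y : ℝ => exp (-y ^ 2) / 2) atTop (𝓝 0) := by
    simpa using (tendsto_exp_atBot.comp
      (tendsto_neg_atTop_atBot.comp (tendsto_pow_atTop two_ne_zero))).div_const 2
  refine squeeze_zero' (Eventually.of_forall fun y => (komatsuBound_pos y).le) ?_ hexp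
  filter_upwards [eventually_ge_atTop 1] with y hy
  have : √(y ^ 2 + 2) ≤ y + 1 := sqrt_le_iff.2 ⟨by linarith, by nlinarith⟩
  unfold komatsuBound
  gcongr
  exact mul_le_of_le_one_right (exp_pos _).le (by linarith)

lemma komatsuBound_lt_integral_Ioi (y : ℝ) : komatsuBound y < ∫ t in Ioi y, exp (-t ^ 2) := by
  set gap := fun u => (∫ t in Ioi u, exp (-t ^ 2)) - komatsuBound u
  have hanti : StrictAnti gap := strictAnti_of_deriv_neg fun u => by
    have hgap : HasDerivAt gap (-exp (-u ^ 2) - deriv komatsuBound u) u :=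
      (hasDerivAt_integral_Ioi_exp_neg_sq u).sub
        (hasDerivAt_komatsuBound u).differentiableAt.hasDerivAt
    rw [hgap.deriv]
    linarith [neg_exp_neg_sq_lt_deriv_komatsuBound u]
  have hlim : Tendsto gap atTop (𝓝 0) := by
    simpa using (tendsto_integral_Ioi_zero tendsto_id).sub tendsto_komatsuBound_atTop
  have hgap_pos : 0 < gap y :=
    (hanti.antitone.le_of_tendsto hlim (y + 1)).trans_lt (hanti (lt_add_one y))
  exact sub_pos.1 hgap_pos

lemma quadratic_eq_mul_komatsuBound (c y T : ℝ) :
    2 * T ^ 2 + 2 * y * (c * exp (-y ^ 2)) * T - (c * exp (-y ^ 2)) ^ 2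
      = 2 * (T - c * komatsuBound y)
          * (T - c * komatsuBound y + c * exp (-y ^ 2) * √(y ^ 2 + 2)) := by
  have hs : √(y ^ 2 + 2) ^ 2 = y ^ 2 + 2 := sq_sqrt (by positivity)
  unfold komatsuBound
  linear_combination (c * exp (-y ^ 2)) ^ 2 / 2 * hs

lemma hasDerivAt_erfc (y : ℝ) : HasDerivAt erfc (-(2 / √π * exp (-y ^ 2))) y := by
  rw [← mul_neg]
  exact (hasDerivAt_integral_Ioi_exp_neg_sq y).const_mul (2 / √π)

lemma two_div_sqrt_pi_mul_komatsuBound_lt_erfc (y : ℝ) : 2 / √π * komatsuBound y < erfc y :=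
  mul_lt_mul_of_pos_left (komatsuBound_lt_integral_Ioi y) (by positivity)

lemma erfc_pos (y : ℝ) : 0 < erfc y :=
  (mul_pos (by positivity) (komatsuBound_pos y)).trans (two_div_sqrt_pi_mul_komatsuBound_lt_erfc y)

lemma sq_lt_two_mul_erfc_sq_add (y : ℝ) :
    (2 / √π * exp (-y ^ 2)) ^ 2
      < 2 * erfc y ^ 2 + 2 * y * (2 / √π * exp (-y ^ 2)) * erfc y := by
  have hgap := sub_pos.2 (two_div_sqrt_pi_mul_komatsuBound_lt_erfc y)
  have hroots : 0 < 2 / √π * exp (-y ^ 2) * √(y ^ 2 + 2) := by positivity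
  nlinarith [quadratic_eq_mul_komatsuBound (2 / √π) y (erfc y),
    mul_pos hgap (add_pos hgap hroots)]

lemma hasDerivAt_log_erfc (y : ℝ) :
    HasDerivAt (fun y => log (erfc y)) (-(2 / √π * exp (-y ^ 2)) / erfc y) y :=
  (hasDerivAt_erfc y).log (erfc_pos y).ne'

lemma hasDerivAt_deriv_log_erfc (y : ℝ) :
    HasDerivAt (deriv fun y => log (erfc y))
      ((2 * y * (2 / √π * exp (-y ^ 2)) * erfc y - (2 / √π * exp (-y ^ 2)) ^ 2) / erfc y ^ 2)
      y := by
  rw [funext fun y => (hasDerivAt_log_erfc y).deriv]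
  have hg := ((hasDerivAt_exp_neg_sq y).const_mul (2 / √π)).fun_neg
  refine (hg.div (hasDerivAt_erfc y) (erfc_pos y).ne').congr_deriv ?_
  ring

lemma neg_two_lt_deriv_deriv_log_erfc (y : ℝ) : -2 < deriv (deriv fun y => log (erfc y)) y := by
  rw [(hasDerivAt_deriv_log_erfc y).deriv, lt_div_iff₀ (pow_pos (erfc_pos y) 2)]
  linarith [sq_lt_two_mul_erfc_sq_add y]

lemma deriv_deriv_quadratic_add_const_mul {L : ℝ → ℝ} (hL : Differentiable ℝ L)
    (hL' : Differentiable ℝ (deriv L)) (a b y : ℝ) :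
    deriv (deriv fun y => a * y ^ 2 + b * L y) y = 2 * a + b * deriv (deriv L) y := by
  have hsq (x : ℝ) : HasDerivAt (fun x : ℝ => x ^ 2) (2 * x) x := by
    simpa using hasDerivAt_pow 2 x
  have h1 : deriv (fun y => a * y ^ 2 + b * L y) = fun x => a * (2 * x) + b * deriv L x :=
    funext fun x => (((hsq x).const_mul a).add ((hL x).hasDerivAt.const_mul b)).deriv
  rw [h1]
  exact ((((hasDerivAt_id y).const_mul 2).const_mul a).add
    ((hL' y).hasDerivAt.const_mul b)).deriv.trans (by ring)

theorem strictConvex_quadratic_add_log_erfc (a b : ℝ) (hab : b ≤ a) (hb : 0 < b) :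
    StrictConvexOn ℝ (Set.Ioi (0 : ℝ))
        (fun y => a * y ^ 2 + b * Real.log (erfc y)) ∧
    ∀ y : ℝ, 0 < y →
      0 < deriv (deriv (fun y => a * y ^ 2 + b * Real.log (erfc y))) y := by
  have hL : Differentiable ℝ fun y => log (erfc y) :=
    fun y => (hasDerivAt_log_erfc y).differentiableAt
  have hL' : Differentiable ℝ (deriv fun y => log (erfc y)) :=
    fun y => (hasDerivAt_deriv_log_erfc y).differentiableAt
  have hpos (y : ℝ) : 0 < deriv (deriv fun y => a * y ^ 2 + b * log (erfc y)) y := by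
    rw [deriv_deriv_quadratic_add_const_mul hL hL']
    nlinarith [neg_two_lt_deriv_deriv_log_erfc y]
  have hcont : Continuous fun y => a * y ^ 2 + b * log (erfc y) :=
    (continuous_const.mul (continuous_pow 2)).add (continuous_const.mul hL.continuous)
  exact ⟨strictConvexOn_of_deriv2_pos' (convex_Ioi 0) hcont.continuousOn fun y _ => hpos y,
    fun y _ => hpos y⟩
end

section
/- Fix η ∈ (0,1) and β ∈ (0,1). Define ψ(α) = (1−β)·√(2/π)·exp(−(erfinv((1−α)/(1−β)))²) / ((α−ηβ)·√2·erfinv((1−α)/(1−β))) for α ∈ (β, 1). Then ψ is strictly increasing on (β, 1). -/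
open Real MeasureTheory Filter Set

/-!
Put `q = erfinv ((1 - α) / (1 - β))`, which decreases as `α` increases. Since
`α - η β = a - b erf q` with `a = 1 - η β > b = 1 - β`, we get `ψ α = (b / √π) / F q` for
`F q = (a - b erf q) q exp (q²)`, so it suffices that `F` is increasing. Now
`F' q = (a - b erf q) (1 + 2 q²) exp (q²) - (2 / √π) b q`, which is positive because
`a - b erf q > b (1 - erf q)` and, by Gordon's bound,
`1 - erf q ≥ (2 / √π) q exp (-q²) / (1 + 2 q²)`.
-/

open Topology

theorem hasDerivAt_erf (y : ℝ) : HasDerivAt erf (2 / √π * exp (-y ^ 2)) y :=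
  ((by fun_prop : Continuous fun t : ℝ => exp (-t ^ 2)).integral_hasStrictDerivAt 0 y).hasDerivAt
    |>.const_mul _

theorem erf_strictMono : StrictMono erf :=
  strictMono_of_deriv_pos fun y => by rw [(hasDerivAt_erf y).deriv]; positivity

theorem continuous_erf : Continuous erf :=
  continuous_iff_continuousAt.2 fun y => (hasDerivAt_erf y).continuousAt

theorem erf_zero : erf 0 = 0 := by
  simp [erf]

theorem tendsto_erf_atTop : Tendsto erf atTop (𝓝 1) := by
  have hint : Integrable fun t : ℝ => exp (-t ^ 2) := by
    simpa using integrable_exp_neg_mul_sq one_pos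
  have hIoi : ∫ t in Ioi (0 : ℝ), exp (-t ^ 2) = √π / 2 := by
    simpa using integral_gaussian_Ioi 1
  have h := (intervalIntegral_tendsto_integral_Ioi 0 hint.integrableOn tendsto_id).const_mul
    (2 / √π)
  rwa [hIoi, div_mul_div_cancel₀ (by positivity), div_self two_ne_zero] at h

theorem tendsto_mul_exp_neg_sq_div_atTop :
    Tendsto (fun q : ℝ => q * exp (-q ^ 2) / (1 + 2 * q ^ 2)) atTop (𝓝 0) := by
  have hexp : Tendsto (fun q : ℝ => exp (-q ^ 2)) atTop (𝓝 0) :=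
    tendsto_exp_neg_atTop_nhds_zero.comp (tendsto_pow_atTop two_ne_zero)
  refine tendsto_of_tendsto_of_tendsto_of_le_of_le' tendsto_const_nhds hexp ?_ ?_ <;>
    filter_upwards [eventually_ge_atTop 0] with q hq
  · positivity
  · rw [div_le_iff₀ (by positivity)]
    nlinarith [exp_pos (-q ^ 2), sq_nonneg (q - 1)]

/-- Gordon's bound: the difference of the two sides tends to `0` at `+∞` and has derivative
`-(2 / √π) * 2 * exp (-q²) / (1 + 2 q²)² < 0`. -/
theorem mul_exp_neg_sq_div_le_one_sub_erf (q : ℝ) :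
    2 / √π * (q * exp (-q ^ 2) / (1 + 2 * q ^ 2)) ≤ 1 - erf q := by
  set H := fun q : ℝ => 1 - erf q - 2 / √π * (q * exp (-q ^ 2) / (1 + 2 * q ^ 2))
  have hH : ∀ q, HasDerivAt H (-(2 / √π) * (2 * exp (-q ^ 2) / (1 + 2 * q ^ 2) ^ 2)) q := by
    intro q
    have hsq : HasDerivAt (fun q : ℝ => q ^ 2) (2 * q) q := by
      simpa using hasDerivAt_pow 2 q
    have := ((hasDerivAt_erf q).const_sub 1).fun_sub
      ((((hasDerivAt_id' q).fun_mul hsq.fun_neg.exp).fun_div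
        ((hsq.const_mul 2).const_add 1) (by positivity)).const_mul (2 / √π))
    refine this.congr_deriv ?_
    field_simp
    ring
  have hlim : Tendsto H atTop (𝓝 0) := by
    simpa using (tendsto_erf_atTop.const_sub 1).sub
      (tendsto_mul_exp_neg_sq_div_atTop.const_mul (2 / √π))
  have hanti : StrictAnti H := strictAnti_of_deriv_neg fun q => by
    rw [(hH q).deriv, neg_mul]
    exact neg_neg_of_pos (by positivity)
  have := hanti.antitone.le_of_tendsto hlim q
  simp only [H] at this
  linarith

theorem strictMono_sub_mul_erf_mul_mul_exp_sq {a b : ℝ} (hb : 0 ≤ b) (hba : b < a) :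
    StrictMono fun q => (a - b * erf q) * (q * exp (q ^ 2)) := by
  refine strictMono_of_deriv_pos fun q => ?_
  have hsq : HasDerivAt (fun q : ℝ => q ^ 2) (2 * q) q := by
    simpa using hasDerivAt_pow 2 q
  have hF := ((hasDerivAt_erf q).const_mul b).const_sub a |>.fun_mul
    ((hasDerivAt_id' q).fun_mul hsq.exp)
  rw [hF.deriv]
  have hpos : 0 < (1 + 2 * q ^ 2) * exp (q ^ 2) := by positivity
  have hgordon : 2 / √π * q ≤ (1 - erf q) * ((1 + 2 * q ^ 2) * exp (q ^ 2)) :=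
    calc 2 / √π * q
        = 2 / √π * (q * exp (-q ^ 2) / (1 + 2 * q ^ 2)) * ((1 + 2 * q ^ 2) * exp (q ^ 2)) := by
          rw [exp_neg]; field_simp
      _ ≤ _ := mul_le_mul_of_nonneg_right (mul_exp_neg_sq_div_le_one_sub_erf q) hpos.le
  have hexp : exp (-q ^ 2) * exp (q ^ 2) = 1 := by rw [← exp_add]; simp
  calc 0 < (a - b * erf q - b * (1 - erf q)) * ((1 + 2 * q ^ 2) * exp (q ^ 2)) :=
        mul_pos (by linarith) hpos
    _ ≤ (a - b * erf q) * ((1 + 2 * q ^ 2) * exp (q ^ 2)) - b * (2 / √π * q) := by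
        nlinarith [mul_le_mul_of_nonneg_left hgordon hb]
    _ = _ := by linear_combination (b * (2 / √π) * q) * hexp

theorem Ioo_subset_range_erf : Ioo 0 1 ⊆ range erf := by
  intro x ⟨hx0, hx1⟩
  obtain ⟨Q, hQ⟩ := (tendsto_erf_atTop.eventually (eventually_gt_nhds hx1)).exists
  exact intermediate_value_univ 0 Q continuous_erf ⟨by rw [erf_zero]; exact hx0.le, hQ.le⟩

theorem erf_erfinv {x : ℝ} (hx : x ∈ Ioo 0 1) : erf (erfinv x) = x :=
  Function.invFun_eq (Ioo_subset_range_erf hx)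

theorem erfinv_strictMonoOn : StrictMonoOn erfinv (Ioo 0 1) := fun x hx y hy hxy => by
  rwa [← erf_strictMono.lt_iff_lt, erf_erfinv hx, erf_erfinv hy]

theorem erfinv_pos {x : ℝ} (hx : x ∈ Ioo 0 1) : 0 < erfinv x := by
  rw [← erf_strictMono.lt_iff_lt, erf_zero, erf_erfinv hx]
  exact hx.1

theorem psi_strictMono (η β : ℝ) (hη : η ∈ Set.Ioo (0:ℝ) 1) (hβ : β ∈ Set.Ioo (0:ℝ) 1) :
    StrictMonoOn
      (fun α => (1 - β) * Real.sqrt (2 / π) *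
          Real.exp (-(erfinv ((1 - α) / (1 - β))) ^ 2) /
        ((α - η * β) * Real.sqrt 2 * erfinv ((1 - α) / (1 - β))))
      (Set.Ioo β 1) := by
  obtain ⟨-, hη1⟩ := hη
  obtain ⟨hβ0, hβ1⟩ := hβ
  have hb : 0 < 1 - β := by linarith
  have hψ (A q : ℝ) :
      (1 - β) * √(2 / π) * exp (-q ^ 2) / (A * √2 * q) = (1 - β) / √π / (A * (q * exp (q ^ 2))) := by
    rw [exp_neg, sqrt_div' _ pi_pos.le]
    field_simp
  have hx : ∀ α ∈ Ioo β 1, (1 - α) / (1 - β) ∈ Ioo 0 1 := fun α ⟨hβα, hα1⟩ =>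
    ⟨div_pos (by linarith) hb, (div_lt_one hb).2 (by linarith)⟩
  have hα : ∀ α ∈ Ioo β 1,
      1 - η * β - (1 - β) * erf (erfinv ((1 - α) / (1 - β))) = α - η * β := fun α hα => by
    rw [erf_erfinv (hx α hα), mul_div_cancel₀ _ hb.ne']
    ring
  have hpos : ∀ α ∈ Ioo β 1,
      0 < (α - η * β) * (erfinv ((1 - α) / (1 - β)) * exp (erfinv ((1 - α) / (1 - β)) ^ 2)) :=
    fun α hα => by
      have := erfinv_pos (hx α hα)
      have : η * β < α := by nlinarith [hα.1]
      positivity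
  intro α₁ hα₁ α₂ hα₂ h12
  simp only [hψ]
  refine div_lt_div_of_pos_left (by positivity) (hpos α₂ hα₂) ?_
  rw [← hα α₁ hα₁, ← hα α₂ hα₂]
  refine strictMono_sub_mul_erf_mul_mul_exp_sq hb.le (by nlinarith) ?_
  exact erfinv_strictMonoOn (hx α₂ hα₂) (hx α₁ hα₁) (div_lt_div_of_pos_right (by linarith) hb)
end
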